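/- arXiv:2202.08549 — 2 statements merged into one kernel-verified Lean document; each statement's English description precedes it below -/
import Mathlib

section
/- Let P be the Poisson(λ) distribution on ℕ and let Q be its right-translation by one, i.e., Q(k) = P(k−1) for k ≥ 1 and Q(0) = 0. Then χ²(Q,P) = 1/λ, and consequently TV(P,Q) ≤ sqrt(1/(2λ)). -/
lemma expsum (l : ℝ) : ∑' k : ℕ, l ^ k / (Nat.factorial k) = Real.exp l := by
  rw [Real.exp_eq_exp_ℝ, NormedSpace.exp_eq_tsum_div]

/-- For P = Poisson(λ) and Q its right-translation by one,
χ²(Q,P) = 1/λ and TV(P,Q) ≤ sqrt(1/(2λ)). -/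
theorem stmt4 (l : ℝ) (hl : 0 < l)
    (P : ℕ → ℝ) (hP : ∀ k, P k = Real.exp (-l) * l ^ k / (Nat.factorial k))
    (Q : ℕ → ℝ) (hQ0 : Q 0 = 0) (hQ : ∀ k, Q (k + 1) = P k) :
    (∑' k, (Q k) ^ 2 / P k) - 1 = 1 / l ∧
    (1 / 2) * (∑' k, |P k - Q k|) ≤ Real.sqrt (1 / (2 * l)) := by
  have hl0 : l ≠ 0 := ne_of_gt hl
  have hc : (0:ℝ) < Real.exp (-l) := Real.exp_pos _
  have hPpos : ∀ k, 0 < P k := by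
    intro k
    rw [hP k]
    positivity
  have hS0 : Summable (fun k : ℕ => l ^ k / (Nat.factorial k : ℝ)) :=
    Real.summable_pow_div_factorial l
  have hSP : Summable P := by
    have := hS0.mul_left (Real.exp (-l))
    refine this.congr fun k => ?_
    rw [hP k]; ring
  have hsumP : ∑' k, P k = 1 := by
    have : ∑' k, P k = Real.exp (-l) * ∑' k, l ^ k / (Nat.factorial k : ℝ) := by
      rw [← tsum_mul_left]
      exact tsum_congr fun k => by rw [hP k]; ring
    rw [this, expsum, ← Real.exp_add]
    simp
  have hg : Summable (fun k : ℕ => (k:ℝ) * l ^ k / (Nat.factorial k : ℝ)) := by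
    rw [← summable_nat_add_iff 1]
    refine (hS0.mul_left l).congr fun k => ?_
    have hfk : ((Nat.factorial k : ℝ)) ≠ 0 := Nat.cast_ne_zero.2 (Nat.factorial_ne_zero k)
    push_cast [Nat.factorial_succ, pow_succ]
    field_simp
  have hgsum : ∑' k : ℕ, (k:ℝ) * l ^ k / (Nat.factorial k : ℝ) = l * Real.exp l := by
    rw [Summable.tsum_eq_zero_add hg]
    simp only [Nat.cast_zero, zero_mul, Nat.cast_add, Nat.cast_one, zero_div, zero_add]
    rw [← expsum l, ← tsum_mul_left]
    refine tsum_congr fun k => ?_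
    have hfk : ((Nat.factorial k : ℝ)) ≠ 0 := Nat.cast_ne_zero.2 (Nat.factorial_ne_zero k)
    push_cast [Nat.factorial_succ, pow_succ]
    field_simp
  have hh : Summable (fun k : ℕ => ((k:ℝ) + 1) * l ^ k / (Nat.factorial k : ℝ)) := by
    refine (hg.add hS0).congr fun k => ?_
    ring
  have hhsum : ∑' k : ℕ, ((k:ℝ) + 1) * l ^ k / (Nat.factorial k : ℝ)
      = (l + 1) * Real.exp l := by
    have heq : (fun k : ℕ => ((k:ℝ) + 1) * l ^ k / (Nat.factorial k : ℝ))
        = fun k : ℕ => (k:ℝ) * l ^ k / (Nat.factorial k : ℝ) + l ^ k / (Nat.factorial k : ℝ) := by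
      funext k; ring
    rw [heq, Summable.tsum_add hg hS0, hgsum, expsum]
    ring
  have hfval : ∀ k, Q (k+1) ^ 2 / P (k+1)
      = (Real.exp (-l) / l) * (((k:ℝ) + 1) * l ^ k / (Nat.factorial k : ℝ)) := by
    intro k
    rw [hQ k, hP k, hP (k+1)]
    have hfk : ((Nat.factorial k : ℝ)) ≠ 0 := Nat.cast_ne_zero.2 (Nat.factorial_ne_zero k)
    push_cast [Nat.factorial_succ, pow_succ]
    field_simp
  have hSf : Summable (fun k => Q k ^ 2 / P k) := by
    rw [← summable_nat_add_iff 1]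
    refine (hh.mul_left (Real.exp (-l) / l)).congr fun k => ?_
    rw [hfval k]
  have hchi : ∑' k, Q k ^ 2 / P k = 1 + 1 / l := by
    rw [Summable.tsum_eq_zero_add hSf, hQ0]
    simp only [ne_eq, OfNat.ofNat_ne_zero, not_false_eq_true, zero_pow, zero_div, zero_add]
    have : ∑' k : ℕ, Q (k+1) ^ 2 / P (k+1)
        = (Real.exp (-l) / l) * ∑' k : ℕ, ((k:ℝ) + 1) * l ^ k / (Nat.factorial k : ℝ) := by
      rw [← tsum_mul_left]
      exact tsum_congr fun k => hfval k
    rw [this, hhsum, Real.exp_neg]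
    field_simp
  refine ⟨by rw [hchi]; ring, ?_⟩
  have hSQ : Summable Q := by
    rw [← summable_nat_add_iff 1]
    exact hSP.congr fun k => (hQ k).symm
  have hsumQ : ∑' k, Q k = 1 := by
    rw [Summable.tsum_eq_zero_add hSQ, hQ0, zero_add]
    rw [← hsumP]
    exact tsum_congr fun k => hQ k
  have hT : Summable (fun k => (P k - Q k) ^ 2 / P k) := by
    refine ((hSP.sub (hSQ.mul_left 2)).add hSf).congr fun k => ?_
    have := (hPpos k).ne'
    field_simp
    ring
  have hTsum : ∑' k, (P k - Q k) ^ 2 / P k = 1 / l := by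
    have heq : (fun k => (P k - Q k) ^ 2 / P k)
        = fun k => (P k - 2 * Q k) + Q k ^ 2 / P k := by
      funext k
      have := (hPpos k).ne'
      field_simp
      ring
    rw [heq, Summable.tsum_add (hSP.sub (hSQ.mul_left 2)) hSf,
      Summable.tsum_sub hSP (hSQ.mul_left 2), tsum_mul_left, hsumP, hsumQ, hchi]
    ring
  -- Cauchy–Schwarz on every finset
  have key : ∀ s : Finset ℕ, ∑ k ∈ s, |P k - Q k| ≤ Real.sqrt (1 / l) := by
    intro s
    have hcs := Finset.sum_sq_le_sum_mul_sum_of_sq_eq_mul s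
      (r := fun k => |P k - Q k|) (f := fun k => (P k - Q k) ^ 2 / P k) (g := P)
      (fun i _ => div_nonneg (sq_nonneg _) (hPpos i).le)
      (fun i _ => (hPpos i).le)
      (fun i _ => by
        rw [sq_abs, div_mul_cancel₀ _ (hPpos i).ne'])
    have h1 : ∑ k ∈ s, (P k - Q k) ^ 2 / P k ≤ 1 / l := by
      rw [← hTsum]
      exact Summable.sum_le_tsum s (fun i _ => div_nonneg (sq_nonneg _) (hPpos i).le) hT
    have h2 : ∑ k ∈ s, P k ≤ 1 := by
      rw [← hsumP]
      exact Summable.sum_le_tsum s (fun i _ => (hPpos i).le) hSP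
    have h3 : (∑ k ∈ s, |P k - Q k|) ^ 2 ≤ 1 / l := by
      calc (∑ k ∈ s, |P k - Q k|) ^ 2
          ≤ (∑ k ∈ s, (P k - Q k) ^ 2 / P k) * ∑ k ∈ s, P k := hcs
        _ ≤ (1 / l) * 1 := by
            apply mul_le_mul h1 h2 (Finset.sum_nonneg fun i _ => (hPpos i).le)
            positivity
        _ = 1 / l := by ring
    have h4 : (0:ℝ) ≤ ∑ k ∈ s, |P k - Q k| := Finset.sum_nonneg fun i _ => abs_nonneg _
    calc ∑ k ∈ s, |P k - Q k| = Real.sqrt ((∑ k ∈ s, |P k - Q k|) ^ 2) :=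
          (Real.sqrt_sq h4).symm
      _ ≤ Real.sqrt (1 / l) := Real.sqrt_le_sqrt h3
  have hSabs : Summable (fun k => |P k - Q k|) := (hSP.sub hSQ).abs
  have hbd : ∑' k, |P k - Q k| ≤ Real.sqrt (1 / l) :=
    Summable.tsum_le_of_sum_le hSabs key
  calc (1 / 2) * ∑' k, |P k - Q k| ≤ (1 / 2) * Real.sqrt (1 / l) := by linarith
    _ ≤ Real.sqrt (1 / (2 * l)) := by
        rw [show (1:ℝ)/2 = Real.sqrt (1/4) by
          rw [show (1:ℝ)/4 = (1/2)^2 by norm_num, Real.sqrt_sq (by norm_num)],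
          ← Real.sqrt_mul (by norm_num)]
        apply Real.sqrt_le_sqrt
        rw [div_mul_div_comm, div_le_div_iff₀ (by positivity) (by positivity)]
        nlinarith
end

section
/- Let X be a finite set and D a σ-smooth distribution on X (i.e., D(x) ≤ 1/(σ|X|) for all x). Let P be the law of i.i.d. Poisson(n/(2|X|)) variables {n_±(x)}_{x∈X} indexed by X × {±1}, and for each x* ∈ X and a fixed labeling y : X → {±1}, let Q_{x*} be the law obtained from P by adding 1 to the coordinate (x*, y(x*)). Then the mixture Q = E_{x*∼D}[Q_{x*}] satisfies TV(P, Q) ≤ 1/sqrt(nσ). -/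
open Finset

/-- The Poisson pmf with mean μ. -/
noncomputable def pois (μ : ℝ) (k : ℕ) : ℝ := Real.exp (-μ) * μ ^ k / (Nat.factorial k)

lemma pois_nonneg {μ : ℝ} (hμ : 0 ≤ μ) (k : ℕ) : 0 ≤ pois μ k := by
  unfold pois; positivity

lemma hasSum_pois {μ : ℝ} (hμ : 0 ≤ μ) : HasSum (pois μ) 1 := by
  have h := ProbabilityTheory.poissonPMFRealSum ⟨μ, hμ⟩
  have heq : pois μ = ProbabilityTheory.poissonPMFReal ⟨μ, hμ⟩ := by
    funext k
    simp [pois, ProbabilityTheory.poissonPMFReal]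
    rfl
  rw [heq]
  exact h

lemma pois_succ (μ : ℝ) (k : ℕ) : ((k : ℝ) + 1) * pois μ (k + 1) = μ * pois μ k := by
  unfold pois
  rw [Nat.factorial_succ]
  have hk : (Nat.factorial k : ℝ) ≠ 0 := Nat.cast_ne_zero.2 (Nat.factorial_ne_zero k)
  push_cast
  field_simp
  ring

lemma hasSum_pois_mean {μ : ℝ} (hμ : 0 ≤ μ) :
    HasSum (fun k : ℕ => (k : ℝ) * pois μ k) μ := by
  have h1 : HasSum (fun k : ℕ => ((k : ℝ) + 1) * pois μ (k + 1)) μ := by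
    have h := (hasSum_pois hμ).mul_left μ
    simp only [mul_one] at h
    simpa only [pois_succ] using h
  have h2 : HasSum (fun k : ℕ => ((k + 1 : ℕ) : ℝ) * pois μ (k + 1)) μ := by
    simpa [Nat.cast_add, Nat.cast_one] using h1
  have h3 := (hasSum_nat_add_iff (f := fun k : ℕ => (k : ℝ) * pois μ k) 1).mp h2
  simpa using h3

lemma hasSum_pois_sq {μ : ℝ} (hμ : 0 ≤ μ) :
    HasSum (fun k : ℕ => (k : ℝ) * (k : ℝ) * pois μ k) (μ * μ + μ) := by
  have h1 : HasSum (fun k : ℕ => μ * ((k : ℝ) * pois μ k) + μ * pois μ k) (μ * μ + μ) := by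
    have ha := (hasSum_pois_mean hμ).mul_left μ
    have hb := (hasSum_pois hμ).mul_left μ
    simpa using ha.add hb
  have key : ∀ k : ℕ, ((k : ℝ) + 1) * ((k : ℝ) + 1) * pois μ (k + 1)
      = μ * ((k : ℝ) * pois μ k) + μ * pois μ k := by
    intro k
    have h := pois_succ μ k
    nlinarith [h]
  have h2 : HasSum (fun k : ℕ => ((k + 1 : ℕ) : ℝ) * ((k + 1 : ℕ) : ℝ) * pois μ (k + 1))
      (μ * μ + μ) := by
    push_cast
    simpa only [key] using h1
  have h3 := (hasSum_nat_add_iff (f := fun k : ℕ => (k : ℝ) * (k : ℝ) * pois μ k) 1).mp h2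
  simpa using h3

lemma hasSum_finsetSum {ι β : Type*} {s : Finset ι} {f : ι → β → ℝ} {a : ι → ℝ}
    (h : ∀ i ∈ s, HasSum (f i) (a i)) :
    HasSum (fun b => ∑ i ∈ s, f i b) (∑ i ∈ s, a i) := by
  classical
  induction s using Finset.induction with
  | empty => simpa using hasSum_zero
  | insert _ _ hx ih =>
    rename_i i s'
    simp only [Finset.sum_insert hx]
    exact (h i (Finset.mem_insert_self _ _)).add
      (ih fun j hj => h j (Finset.mem_insert_of_mem hj))

lemma hasSum_pi_fin : ∀ {m : ℕ} (f : Fin m → ℕ → ℝ) (a : Fin m → ℝ),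
    (∀ i k, 0 ≤ f i k) → (∀ i, HasSum (f i) (a i)) →
    HasSum (fun c : Fin m → ℕ => ∏ i, f i (c i)) (∏ i, a i) := by
  intro m
  induction m with
  | zero =>
    intro f a _ _
    have h1 : (fun c : Fin 0 → ℕ => ∏ i, f i (c i)) = fun _ => (1 : ℝ) := by
      funext c; simp
    rw [h1, Finset.univ_eq_empty, Finset.prod_empty]
    exact hasSum_single (fun i : Fin 0 => i.elim0) fun b hb =>
      absurd (funext fun i => i.elim0) hb
  | succ m ih =>
    intro f a hnn h
    have IH := ih (fun i => f i.succ) (fun i => a i.succ)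
      (fun i k => hnn _ _) (fun i => h _)
    have hf' : (0 : ℕ → ℝ) ≤ f 0 := fun k => hnn 0 k
    have hg' : (0 : (Fin m → ℕ) → ℝ) ≤ fun d : Fin m → ℕ => ∏ i, f i.succ (d i) :=
      fun d => Finset.prod_nonneg fun i _ => hnn _ _
    have hsummable := Summable.mul_of_nonneg (h 0).summable IH.summable hf' hg'
    have hmul := (h 0).mul IH hsummable
    have hcomp : (fun c : Fin (m + 1) → ℕ => ∏ i, f i (c i)) ∘ (Fin.consEquiv fun _ => ℕ)
        = fun p : ℕ × (Fin m → ℕ) => f 0 p.1 * ∏ i, f i.succ (p.2 i) := by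
      funext p
      simp only [Function.comp_apply, Fin.consEquiv_apply, Fin.prod_univ_succ,
        Fin.cons_zero, Fin.cons_succ]
    have h4 : HasSum (fun c : Fin (m + 1) → ℕ => ∏ i, f i (c i)) (a 0 * ∏ i : Fin m, a i.succ) := by
      rw [← Equiv.hasSum_iff (Fin.consEquiv fun _ => ℕ)]
      rw [hcomp]; exact hmul
    rw [Fin.prod_univ_succ]
    exact h4

lemma hasSum_pi_prod {ι : Type*} [Fintype ι] (f : ι → ℕ → ℝ) (a : ι → ℝ)
    (hnn : ∀ i k, 0 ≤ f i k) (h : ∀ i, HasSum (f i) (a i)) :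
    HasSum (fun c : ι → ℕ => ∏ i, f i (c i)) (∏ i, a i) := by
  classical
  set m := Fintype.card ι
  let e : ι ≃ Fin m := Fintype.equivFin ι
  have H := hasSum_pi_fin (fun j => f (e.symm j)) (fun j => a (e.symm j))
    (fun j k => hnn _ _) (fun j => h _)
  let E : (Fin m → ℕ) ≃ (ι → ℕ) := (Equiv.arrowCongr e (Equiv.refl ℕ)).symm
  have hcomp : (fun c : ι → ℕ => ∏ i, f i (c i)) ∘ E
      = fun d : Fin m → ℕ => ∏ j, f (e.symm j) (d j) := by
    funext d
    simp only [Function.comp]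
    refine Fintype.prod_equiv e _ _ fun i => ?_
    simp [E, Equiv.arrowCongr]
  have hval : (∏ j, a (e.symm j)) = ∏ i, a i := by
    refine (Fintype.prod_equiv e _ _ fun i => ?_).symm
    simp
  have h5 := (E.hasSum_iff (f := fun c : ι → ℕ => ∏ i, f i (c i))
    (a := ∏ j, a (e.symm j))).mp (by rw [hcomp]; exact H)
  rwa [hval] at h5

/-- TV distance between product Poisson counts and the mixture obtained by a
σ-smooth adversary adding one labeled sample: TV(P,Q) ≤ 1/√(nσ). -/
theorem stmt7 {X : Type*} [Fintype X] [DecidableEq X] [Nonempty X]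
    (n σ : ℝ) (hn : 0 < n) (hσ : σ ∈ Set.Ioc (0 : ℝ) 1)
    (D : X → ℝ) (hD0 : ∀ x, 0 ≤ D x) (hD1 : ∑ x, D x = 1)
    (hsmooth : ∀ x, D x ≤ 1 / (σ * Fintype.card X))
    (y : X → Bool)
    (P : ((X × Bool) → ℕ) → ℝ)
    (hP : ∀ c, P c = ∏ v : X × Bool, pois (n / (2 * Fintype.card X)) (c v))
    (Q : ((X × Bool) → ℕ) → ℝ)
    (hQ : ∀ c, Q c = ∑ xs : X, D xs *
      (if c (xs, y xs) = 0 then 0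
       else P (Function.update c (xs, y xs) (c (xs, y xs) - 1)))) :
    (1 / 2) * (∑' c : (X × Bool) → ℕ, |P c - Q c|) ≤ 1 / Real.sqrt (n * σ) := by
  classical
  obtain ⟨hσ0, hσ1⟩ := hσ
  have hK : (0 : ℝ) < Fintype.card X := by
    exact_mod_cast Fintype.card_pos_iff.mpr ‹Nonempty X›
  set K : ℝ := (Fintype.card X : ℝ) with hKdef
  set μ : ℝ := n / (2 * K) with hμdef
  have hμ : 0 < μ := by positivity
  have hPnn : ∀ c, 0 ≤ P c := fun c => by
    rw [hP]; exact Finset.prod_nonneg fun v _ => pois_nonneg hμ.le _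
  -- key pointwise identity
  have key : ∀ (c : (X × Bool) → ℕ) (v : X × Bool),
      (if c v = 0 then 0 else P (Function.update c v (c v - 1)))
      = P c * (c v : ℝ) / μ := by
    intro c v
    by_cases h0 : c v = 0
    · simp [h0]
    · obtain ⟨k, hk⟩ := Nat.exists_eq_succ_of_ne_zero h0
      rw [if_neg h0]
      have h1 : P (Function.update c v (c v - 1))
          = pois μ k * ∏ u ∈ Finset.univ \ {v}, pois μ (c u) := by
        rw [hP, show Function.update c v (c v - 1) = Function.update c v k by
          rw [hk]; simp]
        rw [Finset.prod_eq_mul_prod_sdiff_singleton_of_mem (Finset.mem_univ v)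
          (fun u => pois μ (Function.update c v k u)), Function.update_self]
        congr 1
        refine Finset.prod_congr rfl fun u hu => ?_
        rw [Function.update_of_ne (by simpa using (Finset.mem_sdiff.mp hu).2)]
      have h2 : P c = pois μ (c v) * ∏ u ∈ Finset.univ \ {v}, pois μ (c u) := by
        rw [hP]
        exact Finset.prod_eq_mul_prod_sdiff_singleton_of_mem (Finset.mem_univ v) _
      rw [h1, h2, hk]
      have hs := pois_succ μ k
      push_cast
      field_simp
      nlinarith [hs, Finset.prod_nonneg
        (fun u (_ : u ∈ Finset.univ \ {v}) => pois_nonneg hμ.le (c u))]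
  -- g
  set g : ((X × Bool) → ℕ) → ℝ :=
    fun c => ∑ x, D x * ((c (x, y x) : ℝ) / μ) with hgdef
  have hQ' : ∀ c, Q c = P c * g c := by
    intro c
    rw [hQ, hgdef]
    simp only [key]
    rw [Finset.mul_sum]
    refine Finset.sum_congr rfl fun x _ => ?_
    ring
  -- moments
  have hA : HasSum P 1 := by
    have h := hasSum_pi_prod (fun _ : X × Bool => pois μ) (fun _ => (1 : ℝ))
      (fun _ k => pois_nonneg hμ.le k) (fun _ => hasSum_pois hμ.le)
    simp only [Finset.prod_const_one] at h
    have hfun : (fun c : (X × Bool) → ℕ => ∏ v, pois μ (c v)) = P := by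
      funext c; rw [hP]
    rwa [hfun] at h
  have hB : ∀ v₀ : X × Bool, HasSum (fun c => P c * (c v₀ : ℝ)) μ := by
    intro v₀
    have h1d : ∀ v : X × Bool, HasSum
        (fun k : ℕ => pois μ k * (if v = v₀ then (k : ℝ) else 1))
        (if v = v₀ then μ else 1) := by
      intro v
      by_cases hv : v = v₀
      · simp only [hv, if_true]
        have h := hasSum_pois_mean hμ.le
        have heq : (fun k : ℕ => pois μ k * (k : ℝ)) = fun k : ℕ => (k : ℝ) * pois μ k := by
          funext k; ring
        rw [heq]; exact h
      · simp only [hv, if_false, mul_one]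
        exact hasSum_pois hμ.le
    have h := hasSum_pi_prod
      (fun v k => pois μ k * (if v = v₀ then (k : ℝ) else 1))
      (fun v => if v = v₀ then μ else 1)
      (fun v k => by
        by_cases hv : v = v₀
        · simp only [hv, if_true]
          exact mul_nonneg (pois_nonneg hμ.le k) (Nat.cast_nonneg k)
        · simp only [hv, if_false, mul_one]
          exact pois_nonneg hμ.le k)
      h1d
    have hprod : ∀ c : (X × Bool) → ℕ,
        (∏ v, pois μ (c v) * (if v = v₀ then (c v : ℝ) else 1)) = P c * (c v₀ : ℝ) := by
      intro c
      rw [Finset.prod_mul_distrib, hP]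
      congr 1
      simp
    have hval : (∏ v : X × Bool, if v = v₀ then μ else 1) = μ := by simp
    rw [hval] at h
    simpa only [hprod] using h
  have hC : ∀ v₀ v₁ : X × Bool, v₀ ≠ v₁ →
      HasSum (fun c => P c * (c v₀ : ℝ) * (c v₁ : ℝ)) (μ * μ) := by
    intro v₀ v₁ hne
    have h1d : ∀ v : X × Bool, HasSum
        (fun k : ℕ => pois μ k * ((if v = v₀ then (k : ℝ) else 1)
          * (if v = v₁ then (k : ℝ) else 1)))
        ((if v = v₀ then μ else 1) * (if v = v₁ then μ else 1)) := by
      intro v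
      by_cases hv0 : v = v₀
      · subst hv0
        simp only [eq_self_iff_true, if_true, if_neg hne, mul_one]
        have heq : (fun k : ℕ => pois μ k * (k : ℝ)) = fun k : ℕ => (k : ℝ) * pois μ k := by
          funext k; ring
        rw [heq]; exact hasSum_pois_mean hμ.le
      · by_cases hv1 : v = v₁
        · subst hv1
          simp only [if_neg hv0, eq_self_iff_true, if_true, if_false, one_mul]
          have heq : (fun k : ℕ => pois μ k * (k : ℝ)) = fun k : ℕ => (k : ℝ) * pois μ k := by
            funext k; ring
          rw [heq]; exact hasSum_pois_mean hμ.le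
        · simp only [hv0, hv1, if_false, mul_one]
          exact hasSum_pois hμ.le
    have h := hasSum_pi_prod _ _
      (fun v k => by
        have h1 := pois_nonneg hμ.le k
        have h2 : (0:ℝ) ≤ (k : ℝ) := Nat.cast_nonneg k
        have h3 : (0:ℝ) ≤ (if v = v₀ then (k:ℝ) else 1) := by
          split
          · exact h2
          · norm_num
        have h4 : (0:ℝ) ≤ (if v = v₁ then (k:ℝ) else 1) := by
          split
          · exact h2
          · norm_num
        exact mul_nonneg h1 (mul_nonneg h3 h4))
      h1d
    have hprod : ∀ c : (X × Bool) → ℕ,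
        (∏ v, pois μ (c v) * ((if v = v₀ then (c v : ℝ) else 1)
          * (if v = v₁ then (c v : ℝ) else 1)))
        = P c * (c v₀ : ℝ) * (c v₁ : ℝ) := by
      intro c
      rw [Finset.prod_mul_distrib, Finset.prod_mul_distrib, hP]
      simp [mul_assoc]
    have hval : (∏ v : X × Bool, (if v = v₀ then μ else 1) * (if v = v₁ then μ else 1))
        = μ * μ := by
      rw [Finset.prod_mul_distrib]
      simp
    rw [hval] at h
    simpa only [hprod] using h
  have hC2 : ∀ v₀ : X × Bool,
      HasSum (fun c => P c * (c v₀ : ℝ) * (c v₀ : ℝ)) (μ * μ + μ) := by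
    intro v₀
    have h1d : ∀ v : X × Bool, HasSum
        (fun k : ℕ => pois μ k * (if v = v₀ then (k : ℝ) * (k : ℝ) else 1))
        (if v = v₀ then μ * μ + μ else 1) := by
      intro v
      by_cases hv : v = v₀
      · simp only [hv, if_true]
        have heq : (fun k : ℕ => pois μ k * ((k : ℝ) * (k : ℝ)))
            = fun k : ℕ => (k : ℝ) * (k : ℝ) * pois μ k := by
          funext k; ring
        rw [heq]; exact hasSum_pois_sq hμ.le
      · simp only [hv, if_false, mul_one]
        exact hasSum_pois hμ.le
    have h := hasSum_pi_prod _ _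
      (fun v k => by
        have hknn : (0:ℝ) ≤ (k : ℝ) := Nat.cast_nonneg k
        by_cases hv : v = v₀
        · simp only [hv, if_true]
          exact mul_nonneg (pois_nonneg hμ.le k) (mul_nonneg hknn hknn)
        · simp only [hv, if_false, mul_one]
          exact pois_nonneg hμ.le k)
      h1d
    have hprod : ∀ c : (X × Bool) → ℕ,
        (∏ v, pois μ (c v) * (if v = v₀ then (c v : ℝ) * (c v : ℝ) else 1))
        = P c * (c v₀ : ℝ) * (c v₀ : ℝ) := by
      intro c
      rw [Finset.prod_mul_distrib, hP]
      rw [show (∏ v : X × Bool, if v = v₀ then (c v : ℝ) * (c v : ℝ) else 1)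
        = (c v₀ : ℝ) * (c v₀ : ℝ) by simp]
      ring
    have hval : (∏ v : X × Bool, if v = v₀ then μ * μ + μ else 1) = μ * μ + μ := by simp
    rw [hval] at h
    simpa only [hprod] using h
  -- E1
  have E1 : HasSum (fun c => P c * g c) 1 := by
    have hterm : ∀ x : X, x ∈ Finset.univ →
        HasSum (fun c : (X × Bool) → ℕ => (D x / μ) * (P c * (c (x, y x) : ℝ))) (D x) := by
      intro x _
      have h := (hB (x, y x)).mul_left (D x / μ)
      rwa [div_mul_cancel₀ _ hμ.ne'] at h
    have h := hasSum_finsetSum hterm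
    rw [hD1] at h
    have hfun : (fun c : (X × Bool) → ℕ => ∑ x, (D x / μ) * (P c * (c (x, y x) : ℝ)))
        = fun c => P c * g c := by
      funext c
      rw [hgdef, Finset.mul_sum]
      exact Finset.sum_congr rfl fun x _ => by ring
    rwa [hfun] at h
  -- E2
  set S2 : ℝ := ∑ x, D x ^ 2 with hS2def
  have E2 : HasSum (fun c => P c * g c * g c) (1 + S2 / μ) := by
    have hterm : ∀ x1 : X, x1 ∈ Finset.univ → ∀ x2 : X, x2 ∈ Finset.univ →
        HasSum (fun c : (X × Bool) → ℕ =>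
          (D x1 * D x2 / (μ * μ)) * (P c * (c (x1, y x1) : ℝ) * (c (x2, y x2) : ℝ)))
          ((D x1 * D x2 / (μ * μ)) * (μ * μ + if x1 = x2 then μ else 0)) := by
      intro x1 _ x2 _
      by_cases h12 : x1 = x2
      · subst h12
        simp only [if_pos rfl]
        exact (hC2 (x1, y x1)).mul_left _
      · have hvne : (x1, y x1) ≠ (x2, y x2) := fun h => h12 (congrArg Prod.fst h)
        simp only [if_neg h12, add_zero]
        exact (hC (x1, y x1) (x2, y x2) hvne).mul_left _
    have h := hasSum_finsetSum (s := Finset.univ)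
      (f := fun x1 c => ∑ x2, (D x1 * D x2 / (μ * μ))
        * (P c * (c (x1, y x1) : ℝ) * (c (x2, y x2) : ℝ)))
      (a := fun x1 => ∑ x2, (D x1 * D x2 / (μ * μ)) * (μ * μ + if x1 = x2 then μ else 0))
      (fun x1 hx1 => hasSum_finsetSum (fun x2 hx2 => hterm x1 hx1 x2 hx2))
    have hfun : (fun c : (X × Bool) → ℕ => ∑ x1, ∑ x2, (D x1 * D x2 / (μ * μ))
        * (P c * (c (x1, y x1) : ℝ) * (c (x2, y x2) : ℝ)))
        = fun c => P c * g c * g c := by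
      funext c
      rw [hgdef]
      rw [show (P c * (∑ x, D x * ((c (x, y x) : ℝ) / μ)) * (∑ x, D x * ((c (x, y x) : ℝ) / μ)))
        = ∑ x1, ∑ x2, (D x1 * D x2 / (μ * μ))
          * (P c * (c (x1, y x1) : ℝ) * (c (x2, y x2) : ℝ)) from ?_]
      rw [mul_assoc, Finset.sum_mul_sum, Finset.mul_sum]
      refine Finset.sum_congr rfl fun x1 _ => ?_
      rw [Finset.mul_sum]
      refine Finset.sum_congr rfl fun x2 _ => ?_
      ring
    have hval : (∑ x1, ∑ x2 : X, (D x1 * D x2 / (μ * μ)) * (μ * μ + if x1 = x2 then μ else 0))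
        = 1 + S2 / μ := by
      have hterm2 : ∀ x1 x2 : X, (D x1 * D x2 / (μ * μ)) * (μ * μ + if x1 = x2 then μ else 0)
          = D x1 * D x2 + (if x1 = x2 then D x1 * D x2 / μ else 0) := by
        intro x1 x2
        by_cases h : x1 = x2 <;> simp only [h, if_true, if_false]
        · field_simp
        · field_simp
          ring
      simp only [hterm2, Finset.sum_add_distrib]
      have ha : (∑ x1, ∑ x2, D x1 * D x2) = 1 := by
        rw [← Finset.sum_mul_sum, hD1]
        norm_num
      have hb : (∑ x1, ∑ x2, if x1 = x2 then D x1 * D x2 / μ else 0) = S2 / μ := by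
        rw [hS2def, Finset.sum_div]
        refine Finset.sum_congr rfl fun x1 _ => ?_
        rw [Finset.sum_ite_eq]
        simp [sq]
      rw [ha, hb]
    rw [hfun, hval] at h
    exact h
  -- chi-squared
  have Echi : HasSum (fun c => P c * (1 - g c) ^ 2) (S2 / μ) := by
    have h := (hA.sub (E1.mul_left 2)).add E2
    have hfun : (fun c => (P c - 2 * (P c * g c)) + P c * g c * g c)
        = fun c => P c * (1 - g c) ^ 2 := by
      funext c; ring
    rw [hfun] at h
    have : (1 : ℝ) - 2 * 1 + (1 + S2 / μ) = S2 / μ := by ring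
    rwa [this] at h
  have hS2nn : 0 ≤ S2 := Finset.sum_nonneg fun x _ => sq_nonneg _
  have hχ0 : 0 ≤ S2 / μ := by positivity
  have hs2 : S2 ≤ 1 / (σ * K) := by
    rw [hS2def]
    calc ∑ x, D x ^ 2 ≤ ∑ x, D x * (1 / (σ * K)) := by
          refine Finset.sum_le_sum fun x _ => ?_
          have h1 := hsmooth x
          have h2 := hD0 x
          nlinarith
      _ = 1 / (σ * K) := by rw [← Finset.sum_mul, hD1, one_mul]
  have hχbound : S2 / μ ≤ 2 / (n * σ) := by
    have hμval : (1 / (σ * K)) / μ = 2 / (n * σ) := by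
      rw [hμdef]
      field_simp
    calc S2 / μ ≤ (1 / (σ * K)) / μ := by gcongr
      _ = 2 / (n * σ) := hμval
  -- Cauchy-Schwarz
  have habs : ∀ c, |P c - Q c| = P c * |1 - g c| := by
    intro c
    rw [hQ' c, show P c - P c * g c = P c * (1 - g c) by ring, abs_mul,
      abs_of_nonneg (hPnn c)]
  have hfin : ∀ s : Finset ((X × Bool) → ℕ),
      ∑ c ∈ s, P c * |1 - g c| ≤ Real.sqrt (S2 / μ) := by
    intro s
    have hcs := Finset.sum_mul_sq_le_sq_mul_sq s (fun c => Real.sqrt (P c))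
      (fun c => Real.sqrt (P c) * |1 - g c|)
    have hL : (∑ c ∈ s, Real.sqrt (P c) * (Real.sqrt (P c) * |1 - g c|))
        = ∑ c ∈ s, P c * |1 - g c| :=
      Finset.sum_congr rfl fun c _ => by
        rw [← mul_assoc, Real.mul_self_sqrt (hPnn c)]
    have hR1 : (∑ c ∈ s, Real.sqrt (P c) ^ 2) = ∑ c ∈ s, P c :=
      Finset.sum_congr rfl fun c _ => Real.sq_sqrt (hPnn c)
    have hR2 : (∑ c ∈ s, (Real.sqrt (P c) * |1 - g c|) ^ 2)
        = ∑ c ∈ s, P c * (1 - g c) ^ 2 :=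
      Finset.sum_congr rfl fun c _ => by
        rw [mul_pow, Real.sq_sqrt (hPnn c), sq_abs]
    rw [hL, hR1, hR2] at hcs
    have hb1 : (∑ c ∈ s, P c) ≤ 1 := sum_le_hasSum s (fun c _ => hPnn c) hA
    have hb2 : (∑ c ∈ s, P c * (1 - g c) ^ 2) ≤ S2 / μ :=
      sum_le_hasSum s (fun c _ => mul_nonneg (hPnn c) (sq_nonneg _)) Echi
    have hnn2 : (0 : ℝ) ≤ ∑ c ∈ s, P c * (1 - g c) ^ 2 :=
      Finset.sum_nonneg fun c _ => mul_nonneg (hPnn c) (sq_nonneg _)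
    have hnnP : (0 : ℝ) ≤ ∑ c ∈ s, P c := Finset.sum_nonneg fun c _ => hPnn c
    refine Real.le_sqrt_of_sq_le ?_
    calc (∑ c ∈ s, P c * |1 - g c|) ^ 2
        ≤ (∑ c ∈ s, P c) * ∑ c ∈ s, P c * (1 - g c) ^ 2 := hcs
      _ ≤ 1 * (S2 / μ) := by nlinarith
      _ = S2 / μ := one_mul _
  have hsummable : Summable (fun c => P c * |1 - g c|) :=
    summable_of_sum_le (fun c => mul_nonneg (hPnn c) (abs_nonneg _)) hfin
  have htsum : (∑' c, P c * |1 - g c|) ≤ Real.sqrt (S2 / μ) :=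
    Summable.tsum_le_of_sum_le hsummable hfin
  have htseq : (∑' c : (X × Bool) → ℕ, |P c - Q c|) = ∑' c, P c * |1 - g c| :=
    tsum_congr habs
  rw [htseq]
  -- final arithmetic
  have hnσ : (0 : ℝ) < n * σ := by positivity
  have hsq : (0 : ℝ) < Real.sqrt (n * σ) := Real.sqrt_pos.mpr hnσ
  have h5 : Real.sqrt (S2 / μ) ≤ Real.sqrt (2 / (n * σ)) := Real.sqrt_le_sqrt hχbound
  have h6 : Real.sqrt (2 / (n * σ)) = Real.sqrt 2 / Real.sqrt (n * σ) :=
    Real.sqrt_div (by norm_num) _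
  have h7 : Real.sqrt 2 ≤ 2 := by
    nlinarith [Real.sq_sqrt (show (0:ℝ) ≤ 2 by norm_num), Real.sqrt_nonneg 2]
  calc (1 / 2) * (∑' c, P c * |1 - g c|)
      ≤ (1 / 2) * (Real.sqrt 2 / Real.sqrt (n * σ)) := by
        rw [← h6]; linarith [htsum, h5]
    _ = (Real.sqrt 2 / 2) / Real.sqrt (n * σ) := by ring
    _ ≤ 1 / Real.sqrt (n * σ) := by
        gcongr
        linarith
end
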